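/- arXiv:2403.10957 — 5 statements merged into one kernel-verified Lean document; each statement's English description precedes it below -/
import Mathlib

section
/- Let r ≥ 2 be an integer, let G be a finite simple graph in which every vertex has degree at least r, and let H be a connected finite simple graph. Then for any fixed vertex h of H, the G-layer G^h = {(g,h) : g ∈ V(G)} is an r-percolating set of the direct product G×H; consequently m(G×H, r) ≤ |V(G)|. -/
open SimpleGraph

/-- The direct (tensor/categorical) product of two simple graphs. -/
def directProd {V W : Type*} (G : SimpleGraph V) (H : SimpleGraph W) :
    SimpleGraph (V × W) where
  Adj p q := G.Adj p.1 q.1 ∧ H.Adj p.2 q.2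
  symm := ⟨fun _ _ h => ⟨h.1.symm, h.2.symm⟩⟩
  loopless := ⟨fun p h => G.loopless.irrefl p.1 h.1⟩

/-- One step of the `r`-neighbor bootstrap percolation process: a vertex becomes
infected once it has at least `r` infected neighbors. -/
def percStep {V : Type*} (G : SimpleGraph V) (r : ℕ) (A : Set V) : Set V :=
  A ∪ {v | r ≤ {u | G.Adj v u ∧ u ∈ A}.ncard}

/-- `A` is an `r`-percolating set: iterating the update rule eventually infects
every vertex of the graph. -/
def Percolates {V : Type*} (G : SimpleGraph V) (r : ℕ) (A : Set V) : Prop :=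
  ∃ t : ℕ, (percStep G r)^[t] A = Set.univ

/-- `percNum G r` is `m(G,r)`, the minimum cardinality of an `r`-percolating set. -/
noncomputable def percNum {V : Type*} (G : SimpleGraph V) (r : ℕ) : ℕ :=
  sInf {n | ∃ A : Set V, Percolates G r A ∧ A.ncard = n}

/-!
If `(u, c)` is infected for every neighbour `u` of `v` in `G` and `c ~ b` in `H`, then `(v, b)` has
at least `deg_G v ≥ r` infected neighbours in `G × H`. Hence a fully infected layer `G^c` infects
every adjacent layer in one step, and by connectivity of `H` the infection spreads from `G^h` to all
layers within `|V(H)|` steps.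
-/

section Percolation

variable {V : Type*} (G : SimpleGraph V) (r : ℕ)

lemma id_le_percStep : id ≤ percStep G r := fun _ => Set.subset_union_left

lemma percStep_iterate_subset {m n : ℕ} (hmn : m ≤ n) (A : Set V) :
    (percStep G r)^[m] A ⊆ (percStep G r)^[n] A :=
  Function.monotone_iterate_of_id_le (id_le_percStep G r) hmn A

variable {G r}

lemma mem_percStep_of_subset [Finite V] {A S : Set V} {v : V}
    (hS : S ⊆ {u | G.Adj v u ∧ u ∈ A}) (hr : r ≤ S.ncard) : v ∈ percStep G r A :=
  Or.inr (hr.trans (Set.ncard_le_ncard hS (Set.toFinite _)))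

lemma percNum_le_ncard {A : Set V} (hA : Percolates G r A) : percNum G r ≤ A.ncard :=
  Nat.sInf_le ⟨A, hA, rfl⟩

end Percolation

lemma SimpleGraph.ncard_neighborSet_eq_degree {V : Type*} (G : SimpleGraph V) (v : V)
    [Fintype (G.neighborSet v)] : (G.neighborSet v).ncard = G.degree v := by
  rw [← Nat.card_coe_set_eq, Nat.card_eq_fintype_card, card_neighborSet_eq_degree]

/-- The `G`-layer `G^h` of `G × H`. -/
def layer (V : Type*) {W : Type*} (h : W) : Set (V × W) := {p | p.2 = h}

lemma ncard_layer (V : Type*) [Finite V] {W : Type*} (h : W) :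
    (layer V h).ncard = Nat.card V := by
  have : layer V h = Set.range (fun v : V => (v, h)) := by
    ext ⟨v, b⟩
    simp [layer, eq_comm]
  rw [this, Set.ncard_range_of_injective (fun _ _ huv => (Prod.ext_iff.mp huv).1)]

section Layers

variable {V W : Type*} [Fintype V] [Finite W] {G : SimpleGraph V} [DecidableRel G.Adj]
  {H : SimpleGraph W} {r : ℕ}

lemma layer_subset_percStep (hdeg : ∀ v : V, r ≤ G.degree v) {b c : W} (hbc : H.Adj b c)
    {A : Set (V × W)} (hA : layer V c ⊆ A) : layer V b ⊆ percStep (directProd G H) r A := by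
  rintro ⟨v, _⟩ rfl
  refine mem_percStep_of_subset (S := (fun u => (u, c)) '' G.neighborSet v)
    (fun _ ⟨u, hu, hq⟩ => hq ▸ ⟨⟨hu, hbc⟩, hA rfl⟩) ?_
  rw [Set.ncard_image_of_injective _ (fun _ _ huv => (Prod.ext_iff.mp huv).1),
    ncard_neighborSet_eq_degree]
  exact hdeg v

lemma layer_subset_percStep_iterate_length (hdeg : ∀ v : V, r ≤ G.degree v) {b c : W}
    (w : H.Walk b c) : layer V b ⊆ (percStep (directProd G H) r)^[w.length] (layer V c) := by
  induction w with
  | nil => exact subset_rfl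
  | cons hadj _ ih =>
    rw [Walk.length_cons, Function.iterate_succ_apply']
    exact layer_subset_percStep hdeg hadj ih

end Layers

theorem stmt_1_general {V W : Type*} [Fintype V] [Fintype W]
    (G : SimpleGraph V) (H : SimpleGraph W) [DecidableRel G.Adj]
    (r : ℕ) (hdeg : ∀ v : V, r ≤ G.degree v) (hH : H.Connected)
    (h : W) :
    Percolates (directProd G H) r {p : V × W | p.2 = h} ∧
      percNum (directProd G H) r ≤ Fintype.card V := by
  have hperc : Percolates (directProd G H) r (layer V h) := by
    refine ⟨Fintype.card W, Set.eq_univ_of_forall fun p => ?_⟩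
    obtain ⟨w, hw, -⟩ := hH.exists_path_of_dist p.2 h
    exact percStep_iterate_subset _ _ hw.length_lt.le _
      (layer_subset_percStep_iterate_length hdeg w rfl)
  refine ⟨hperc, ?_⟩
  simpa only [ncard_layer, Nat.card_eq_fintype_card] using percNum_le_ncard hperc

theorem stmt_1 {V W : Type*} [Fintype V] [Fintype W]
    (G : SimpleGraph V) (H : SimpleGraph W) [DecidableRel G.Adj]
    (r : ℕ) (hr : 2 ≤ r) (hdeg : ∀ v : V, r ≤ G.degree v) (hH : H.Connected)
    (h : W) :
    Percolates (directProd G H) r {p : V × W | p.2 = h} ∧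
      percNum (directProd G H) r ≤ Fintype.card V :=
  stmt_1_general G H r hdeg hH h
end

section
/- The direct product P₃×P₃ of two paths on 3 vertices satisfies m(P₃×P₃, 2) = 6. -/
open SimpleGraph

/-!
`P₃ × P₃` falls apart into two components: a star with centre `(1,1)` whose leaves are the four
corners, and the 4-cycle on the four edge midpoints. A vertex of degree `1 < 2` is never infected
later, so every corner lies in a percolating set; a 4-cycle with at most one infected vertex gains
no further one, so a percolating set contains two of its vertices. Conversely, the corners together
with two opposite midpoints infect everything in one step.
-/

section Percolation

variable {V : Type*} {G : SimpleGraph V} {r : ℕ}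

theorem percStep_mono [Finite V] : Monotone (percStep G r) := by
  intro A B hAB
  refine Set.union_subset_union hAB fun v hv => le_trans hv (Set.ncard_le_ncard ?_)
  exact fun u hu => ⟨hu.1, hAB hu.2⟩

theorem percStep_subset_self_iff {C : Set V} :
    percStep G r C ⊆ C ↔ ∀ v ∉ C, {u | G.Adj v u ∧ u ∈ C}.ncard < r := by
  simp only [percStep, Set.union_subset_iff, subset_refl, true_and]
  exact ⟨fun h v hv => lt_of_not_ge fun hr => hv (h hr),
    fun h v hr => by_contra fun hv => (h v hv).not_ge hr⟩

theorem Percolates.eq_univ_of_subset [Finite V] {A C : Set V} (hA : Percolates G r A)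
    (hAC : A ⊆ C) (hC : percStep G r C ⊆ C) : C = Set.univ := by
  obtain ⟨t, ht⟩ := hA
  have hiter : ∀ n, (percStep G r)^[n] A ⊆ C := by
    intro n
    induction n with
    | zero => exact hAC
    | succ n ih =>
      rw [Function.iterate_succ_apply']
      exact (percStep_mono ih).trans hC
  exact Set.eq_univ_of_univ_subset (ht ▸ hiter t)

theorem Percolates.mem_of_degree_lt [Fintype V] [DecidableRel G.Adj] {A : Set V}
    (hA : Percolates G r A) {v : V} (hv : G.degree v < r) : v ∈ A := by
  by_contra hvA
  have hclosed : percStep G r {v}ᶜ ⊆ {v}ᶜ := by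
    refine percStep_subset_self_iff.2 fun w hw => ?_
    rw [Set.notMem_compl_iff, Set.mem_singleton_iff] at hw
    subst hw
    refine (Set.ncard_le_ncard (t := G.neighborSet w) fun u hu => hu.1).trans_lt ?_
    rwa [← coe_neighborFinset, Set.ncard_coe_finset, card_neighborFinset_eq_degree]
  have huniv := hA.eq_univ_of_subset (Set.subset_compl_singleton_iff.2 hvA) hclosed
  exact Set.notMem_compl_iff.2 rfl (huniv ▸ Set.mem_univ v)

theorem ncard_setOf_adj_mem_coe [Fintype V] [DecidableRel G.Adj] [DecidableEq V] (v : V)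
    (S : Finset V) : {u | G.Adj v u ∧ u ∈ (S : Set V)}.ncard = (G.neighborFinset v ∩ S).card := by
  rw [← Set.ncard_coe_finset, Finset.coe_inter, coe_neighborFinset]
  rfl

/-- Since no edge leaves `W`, the uninfected part of `W` only ever sees the `< r` initially
infected vertices of `W`. -/
theorem Percolates.subset_of_ncard_inter_lt [Finite V] {A W : Set V} (hA : Percolates G r A)
    (hW : ∀ v ∈ W, ∀ u, G.Adj v u → u ∈ W) (hAW : (A ∩ W).ncard < r) : W ⊆ A := by
  have hclosed : percStep G r (W \ A)ᶜ ⊆ (W \ A)ᶜ := by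
    refine percStep_subset_self_iff.2 fun v hv => ?_
    rw [Set.notMem_compl_iff] at hv
    refine (Set.ncard_le_ncard fun u hu => ?_).trans_lt hAW
    have huW := hW v hv.1 u hu.1
    exact ⟨by_contra fun huA => hu.2 ⟨huW, huA⟩, huW⟩
  have huniv := hA.eq_univ_of_subset (fun a ha (h : a ∈ W \ A) => h.2 ha) hclosed
  intro w hw
  by_contra hwA
  exact (huniv ▸ Set.mem_univ w) ⟨hw, hwA⟩

theorem percNum_eq {n : ℕ} {A : Set V} (hA : Percolates G r A) (hn : A.ncard = n)
    (hmin : ∀ B : Set V, Percolates G r B → n ≤ B.ncard) : percNum G r = n := by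
  refine le_antisymm (Nat.sInf_le ⟨A, hA, hn⟩) (le_csInf ⟨n, A, hA, hn⟩ ?_)
  rintro _ ⟨B, hB, rfl⟩
  exact hmin B hB

end Percolation

namespace PathProduct

instance : DecidableRel (pathGraph 3).Adj := fun _ _ => decidable_of_iff _ pathGraph_adj.symm

instance : DecidableRel (directProd (pathGraph 3) (pathGraph 3)).Adj := fun p q =>
  inferInstanceAs (Decidable ((pathGraph 3).Adj p.1 q.1 ∧ (pathGraph 3).Adj p.2 q.2))

local notation "P₃×P₃" => directProd (pathGraph 3) (pathGraph 3)

def corners : Finset (Fin 3 × Fin 3) := {(0, 0), (0, 2), (2, 0), (2, 2)}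

def cycle : Finset (Fin 3 × Fin 3) := {(0, 1), (1, 0), (1, 2), (2, 1)}

def percolatingSet : Finset (Fin 3 × Fin 3) := corners ∪ {(0, 1), (2, 1)}

theorem degree_of_mem_corners : ∀ c ∈ corners, (P₃×P₃).degree c = 1 := by decide

theorem mem_cycle_of_adj : ∀ v ∈ cycle, ∀ u, (P₃×P₃).Adj v u → u ∈ cycle := by decide

theorem disjoint_corners_cycle : Disjoint corners cycle := by decide

theorem two_le_card_neighborFinset_inter_percolatingSet :
    ∀ v ∉ percolatingSet, 2 ≤ ((P₃×P₃).neighborFinset v ∩ percolatingSet).card := by decide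

theorem percolates_percolatingSet : Percolates (P₃×P₃) 2 percolatingSet := by
  refine ⟨1, Set.eq_univ_of_forall fun v => ?_⟩
  by_cases hv : v ∈ percolatingSet
  · exact Or.inl hv
  · refine Or.inr ?_
    rw [Set.mem_ofPred_eq, ncard_setOf_adj_mem_coe]
    exact two_le_card_neighborFinset_inter_percolatingSet v hv

theorem six_le_ncard_of_percolates {A : Set (Fin 3 × Fin 3)} (hA : Percolates (P₃×P₃) 2 A) :
    6 ≤ A.ncard := by
  have hcorners : (corners : Set (Fin 3 × Fin 3)) ⊆ A := fun c hc =>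
    hA.mem_of_degree_lt (by rw [degree_of_mem_corners c hc]; norm_num)
  have hcycle : 2 ≤ (A ∩ cycle).ncard := by
    by_contra! h
    rw [Set.inter_eq_right.2 (hA.subset_of_ncard_inter_lt mem_cycle_of_adj h),
      Set.ncard_coe_finset] at h
    exact absurd h (by decide)
  calc 6 = corners.card + 2 := rfl
    _ ≤ (corners ∪ (A ∩ cycle) : Set _).ncard := by
      have hdisj := (Finset.disjoint_coe.2 disjoint_corners_cycle).mono_right
        (Set.inter_subset_right (s := A))
      rw [Set.ncard_union_eq hdisj, Set.ncard_coe_finset]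
      omega
    _ ≤ A.ncard := Set.ncard_le_ncard (Set.union_subset hcorners Set.inter_subset_left)

end PathProduct

theorem stmt_13 : percNum (directProd (pathGraph 3) (pathGraph 3)) 2 = 6 :=
  percNum_eq PathProduct.percolates_percolatingSet (by rw [Set.ncard_coe_finset]; rfl)
    fun _ => PathProduct.six_le_ncard_of_percolates
end

section
/- If G is a bipartite finite simple graph in which every vertex has degree at least 2, then m(G, 2) ≤ |V(G)|/2, i.e., G has a 2-percolating set of size at most half its order. -/
open SimpleGraph

/-
A proper 2-colouring splits the vertices into two independent colour classes. Each class
2-percolates in a single step: a vertex outside it has all of its at least two neighbours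
inside it. The smaller class has at most half of the vertices.
-/

theorem percNum_le_ncard_of_percolates {V : Type*} {G : SimpleGraph V} {r : ℕ} {A : Set V}
    (hA : Percolates G r A) : percNum G r ≤ A.ncard :=
  Nat.sInf_le ⟨A, hA, rfl⟩

theorem percolates_of_isIndepSet_compl {V : Type*} {G : SimpleGraph V} [G.LocallyFinite]
    {r : ℕ} {A : Set V} (hA : G.IsIndepSet Aᶜ) (hdeg : ∀ v ∉ A, r ≤ G.degree v) :
    Percolates G r A := by
  refine ⟨1, Set.eq_univ_of_forall fun v => ?_⟩
  by_cases hv : v ∈ A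
  · exact Or.inl hv
  · have hnbrs : {u | G.Adj v u ∧ u ∈ A} = G.neighborSet v := by
      ext u
      refine ⟨And.left, fun hvu => ⟨hvu, ?_⟩⟩
      by_contra hu
      exact hA hv hu hvu.ne hvu
    right
    change r ≤ {u | G.Adj v u ∧ u ∈ A}.ncard
    rw [hnbrs, Set.ncard_eq_toFinset_card', Set.toFinset_card, card_neighborSet_eq_degree]
    exact hdeg v hv

namespace SimpleGraph.Coloring

variable {V : Type*} {G : SimpleGraph V}

theorem compl_colorClass_fin_two (C : G.Coloring (Fin 2)) (i : Fin 2) :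
    (C.colorClass i)ᶜ = C.colorClass i.rev := by
  ext v
  simp only [colorClass, Set.mem_compl_iff, Set.mem_ofPred_eq, Fin.ext_iff, Fin.val_rev]
  omega

theorem percolates_colorClass_fin_two [G.LocallyFinite] {r : ℕ} (C : G.Coloring (Fin 2))
    (hδ : ∀ v, r ≤ G.degree v) (i : Fin 2) : Percolates G r (C.colorClass i) :=
  percolates_of_isIndepSet_compl
    (C.compl_colorClass_fin_two i ▸ C.isIndepSet_colorClass i.rev) fun v _ => hδ v

end SimpleGraph.Coloring

theorem stmt_15 {V : Type*} [Fintype V] (G : SimpleGraph V) [DecidableRel G.Adj]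
    (hbip : G.Colorable 2) (hδ : ∀ v : V, 2 ≤ G.degree v) :
    2 * percNum G 2 ≤ Fintype.card V := by
  obtain ⟨C⟩ := hbip
  have hle (i : Fin 2) : percNum G 2 ≤ (C.colorClass i).ncard :=
    percNum_le_ncard_of_percolates (C.percolates_colorClass_fin_two hδ i)
  have hsum : (C.colorClass 0).ncard + (C.colorClass 1).ncard = Fintype.card V := by
    rw [← Nat.card_eq_fintype_card, ← Set.ncard_add_ncard_compl (C.colorClass 0),
      C.compl_colorClass_fin_two]
    rfl
  have h0 := hle 0
  have h1 := hle 1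
  omega
end

section
/- For every integer r ≥ 2, the direct product K_{r,r}×K₂ of the complete bipartite graph K_{r,r} with the complete graph on two vertices satisfies m(K_{r,r}×K₂, r) = 2r, i.e., its r-bootstrap percolation number equals the order of K_{r,r}. -/
open SimpleGraph

/-!
Every vertex of `K_{r,r} × K₂` has degree exactly `r`, so a vertex that is not initially infected
gets infected only after *all* its neighbours are. In each layer `i`, the left vertices `L × {i}`
are adjacent exactly to the right vertices `R × {i + 1}` and vice versa; hence if neither of these
two sets lies in `A`, neither ever becomes fully infected. A percolating set therefore contains one
of them for each `i`, i.e. two disjoint sets of `r` vertices. Conversely the `2r` left vertices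
infect every right vertex in one step.
-/

section Percolation

variable {V : Type*} [Finite V] {G : SimpleGraph V} {r : ℕ} {A : Set V}

theorem neighborSet_subset_of_mem_percStep {v : V} (hv : v ∈ percStep G r A) (hvA : v ∉ A)
    (hdeg : (G.neighborSet v).ncard ≤ r) : G.neighborSet v ⊆ A := by
  have hv : r ≤ (G.neighborSet v ∩ A).ncard := hv.resolve_left hvA
  have hfull : G.neighborSet v ∩ A = G.neighborSet v :=
    Set.eq_of_subset_of_ncard_le Set.inter_subset_left (hdeg.trans hv)
  exact Set.inter_eq_left.mp hfull

theorem subset_or_subset_of_subset_percStep {S T : Set V}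
    (hST : ∀ v ∈ S, G.neighborSet v = T) (hT : T.ncard ≤ r) (hS : S ⊆ percStep G r A) :
    S ⊆ A ∨ T ⊆ A := by
  refine or_iff_not_imp_left.mpr fun hSA => ?_
  obtain ⟨v, hvS, hvA⟩ := Set.not_subset.mp hSA
  rw [← hST v hvS] at hT ⊢
  exact neighborSet_subset_of_mem_percStep (hS hvS) hvA hT

theorem subset_or_subset_of_subset_iterate_percStep {S T : Set V}
    (hST : ∀ v ∈ S, G.neighborSet v = T) (hTS : ∀ w ∈ T, G.neighborSet w = S)
    (hS : S.ncard ≤ r) (hT : T.ncard ≤ r) :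
    ∀ t : ℕ, S ⊆ (percStep G r)^[t] A ∨ T ⊆ (percStep G r)^[t] A → S ⊆ A ∨ T ⊆ A
  | 0, h => h
  | t + 1, h => by
    rw [Function.iterate_succ_apply'] at h
    refine subset_or_subset_of_subset_iterate_percStep hST hTS hS hT t ?_
    rcases h with h | h
    · exact subset_or_subset_of_subset_percStep hST hT h
    · exact (subset_or_subset_of_subset_percStep hTS hS h).symm

theorem Percolates.subset_or_subset {S T : Set V} (hA : Percolates G r A)
    (hST : ∀ v ∈ S, G.neighborSet v = T) (hTS : ∀ w ∈ T, G.neighborSet w = S)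
    (hS : S.ncard ≤ r) (hT : T.ncard ≤ r) : S ⊆ A ∨ T ⊆ A := by
  obtain ⟨t, ht⟩ := hA
  exact subset_or_subset_of_subset_iterate_percStep hST hTS hS hT t
    (Or.inl (ht ▸ Set.subset_univ S))

end Percolation

theorem percolates_of_forall_le_ncard {V : Type*} {G : SimpleGraph V} {r : ℕ} {A : Set V}
    (h : ∀ v ∉ A, r ≤ (G.neighborSet v ∩ A).ncard) : Percolates G r A :=
  ⟨1, Set.eq_univ_of_forall fun v => (em (v ∈ A)).imp id (h v)⟩

theorem percNum_eq_of_percolates {V : Type*} {G : SimpleGraph V} {r n : ℕ} {A : Set V}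
    (hA : Percolates G r A) (hcard : A.ncard = n)
    (hmin : ∀ B : Set V, Percolates G r B → n ≤ B.ncard) : percNum G r = n :=
  le_antisymm (Nat.sInf_le ⟨A, hA, hcard⟩)
    (le_csInf ⟨n, A, hA, hcard⟩ fun _ ⟨B, hB, hBn⟩ => hBn ▸ hmin B hB)

theorem directProd_neighborSet {V W : Type*} (G : SimpleGraph V) (H : SimpleGraph W)
    (v : V) (w : W) :
    (directProd G H).neighborSet (v, w) = G.neighborSet v ×ˢ H.neighborSet w :=
  rfl

theorem completeBipartiteGraph_neighborSet_inl {α β : Type*} (a : α) :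
    (completeBipartiteGraph α β).neighborSet (Sum.inl a) = Set.range Sum.inr := by
  ext (b | b) <;> simp

theorem completeBipartiteGraph_neighborSet_inr {α β : Type*} (b : β) :
    (completeBipartiteGraph α β).neighborSet (Sum.inr b) = Set.range Sum.inl := by
  ext (a | a) <;> simp

theorem Fin.two_compl_singleton (i : Fin 2) : ({i}ᶜ : Set (Fin 2)) = {i + 1} := by
  ext j
  simp only [Set.mem_compl_iff, Set.mem_singleton_iff]
  revert i j
  decide

theorem ncard_range_prod {n : ℕ} {β γ : Type*} {f : Fin n → β} (hf : f.Injective) (s : Set γ) :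
    (Set.range f ×ˢ s).ncard = n * s.ncard := by
  rw [Set.ncard_prod, Set.ncard_range_of_injective hf, Nat.card_fin]

section CompleteBipartiteTimesK2

variable {r : ℕ}

local notation "𝒢" => directProd (completeBipartiteGraph (Fin r) (Fin r)) (⊤ : SimpleGraph (Fin 2))

theorem Percolates.range_inl_prod_subset_or_range_inr_prod_subset
    {A : Set ((Fin r ⊕ Fin r) × Fin 2)} (hA : Percolates 𝒢 r A) (i : Fin 2) :
    Set.range Sum.inl ×ˢ {i} ⊆ A ∨ Set.range Sum.inr ×ˢ {i + 1} ⊆ A := by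
  refine hA.subset_or_subset ?_ ?_ ?_ ?_
  · rintro ⟨_, _⟩ ⟨⟨a, rfl⟩, rfl⟩
    rw [directProd_neighborSet, completeBipartiteGraph_neighborSet_inl, neighborSet_top,
      Fin.two_compl_singleton]
  · rintro ⟨_, _⟩ ⟨⟨b, rfl⟩, rfl⟩
    rw [directProd_neighborSet, completeBipartiteGraph_neighborSet_inr, neighborSet_top,
      Fin.two_compl_singleton, show i + 1 + 1 = i by revert i; decide]
  · rw [ncard_range_prod Sum.inl_injective, Set.ncard_singleton, mul_one]
  · rw [ncard_range_prod Sum.inr_injective, Set.ncard_singleton, mul_one]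

theorem two_mul_le_ncard_of_percolates {A : Set ((Fin r ⊕ Fin r) × Fin 2)}
    (hA : Percolates 𝒢 r A) : 2 * r ≤ A.ncard := by
  have hle : ∀ X Y : Set ((Fin r ⊕ Fin r) × Fin 2), X ⊆ A → Y ⊆ A → Disjoint X Y →
      X.ncard = r → Y.ncard = r → 2 * r ≤ A.ncard := fun X Y hX hY hXY hXr hYr => by
    have := Set.ncard_union_eq hXY
    have := Set.ncard_le_ncard (Set.union_subset hX hY)
    omega
  rcases hA.range_inl_prod_subset_or_range_inr_prod_subset 0 with h0 | h0 <;>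
  rcases hA.range_inl_prod_subset_or_range_inr_prod_subset 1 with h1 | h1 <;>
  refine hle _ _ h0 h1 ?_ ?_ ?_ <;>
  simp [Set.disjoint_prod, Set.isCompl_range_inl_range_inr.disjoint,
    Set.isCompl_range_inl_range_inr.disjoint.symm, Set.ncard_range_of_injective Sum.inl_injective,
    Set.ncard_range_of_injective Sum.inr_injective]

theorem percolates_range_inl_prod_univ : Percolates 𝒢 r (Set.range Sum.inl ×ˢ Set.univ) := by
  refine percolates_of_forall_le_ncard ?_
  rintro ⟨a | b, j⟩ hv
  · exact absurd ⟨⟨a, rfl⟩, trivial⟩ hv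
  · rw [directProd_neighborSet, completeBipartiteGraph_neighborSet_inr, neighborSet_top,
      Set.inter_eq_left.mpr (Set.prod_mono le_rfl (Set.subset_univ _)),
      ncard_range_prod Sum.inl_injective, Fin.two_compl_singleton, Set.ncard_singleton, mul_one]

end CompleteBipartiteTimesK2

theorem stmt_16_general (r : ℕ) :
    percNum
      (directProd (completeBipartiteGraph (Fin r) (Fin r))
        (⊤ : SimpleGraph (Fin 2))) r = 2 * r := by
  refine percNum_eq_of_percolates percolates_range_inl_prod_univ ?_
    fun _ => two_mul_le_ncard_of_percolates
  rw [ncard_range_prod Sum.inl_injective, Set.ncard_univ, Nat.card_fin, mul_comm]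

theorem stmt_16 (r : ℕ) (hr : 2 ≤ r) :
    percNum
      (directProd (completeBipartiteGraph (Fin r) (Fin r))
        (⊤ : SimpleGraph (Fin 2))) r = 2 * r :=
  stmt_16_general r
end

section
/- Let r ≥ 2 and let G be a connected finite simple graph with at least 3 vertices. Then for every integer n ≥ 2r, the direct product G×K_n satisfies m(G×K_n, r) = r. -/
open SimpleGraph

/-! Infect `r` vertices `{g} × R` of a single column, where `g` has two distinct neighbours
`u₁, u₂` in `G`. Every `(uᵢ, j)` with `j ∉ R` sees all of `{g} × R`, so the columns of
`u₁, u₂` fill up outside `R`; then each `(g, j)` sees at least `2(n - r - 1) ≥ r` of those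
vertices, so the column of `g` is fully infected. A full column infects the column of every
`G`-neighbour, since each `(b, j)` sees the `n - 1 ≥ r` vertices `(a, j')`, `j' ≠ j`; by
connectivity everything gets infected. Conversely, fewer than `r` infected vertices never infect
anything new. -/

section Percolation

variable {V : Type*} {G : SimpleGraph V} {r : ℕ} {A : Set V}

def percClosure (G : SimpleGraph V) (r : ℕ) (A : Set V) : Set V :=
  ⋃ t, (percStep G r)^[t] A

lemma subset_percClosure : A ⊆ percClosure G r A :=
  Set.subset_iUnion_of_subset 0 subset_rfl

lemma monotone_iterate_percStep : Monotone fun t => (percStep G r)^[t] A :=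
  monotone_nat_of_le_succ fun t => by
    rw [Function.iterate_succ_apply']
    exact Set.subset_union_left

lemma exists_subset_iterate_of_subset_percClosure [Finite V] {S : Set V}
    (hS : S ⊆ percClosure G r A) : ∃ t, S ⊆ (percStep G r)^[t] A := by
  have hdir : Directed (· ⊆ ·) fun t => (percStep G r)^[t] A :=
    monotone_iterate_percStep.directed_le
  obtain ⟨t, ht⟩ := hdir.exists_mem_subset_of_finset_subset_biUnion (s := S.toFinite.toFinset)
    (by simpa [percClosure] using hS)
  exact ⟨t, by simpa using ht⟩

lemma mem_percClosure_of_le_ncard [Finite V] {v : V} {S : Set V}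
    (hS : ∀ u ∈ S, G.Adj v u ∧ u ∈ percClosure G r A) (hr : r ≤ S.ncard) :
    v ∈ percClosure G r A := by
  obtain ⟨t, ht⟩ := exists_subset_iterate_of_subset_percClosure fun u hu => (hS u hu).2
  refine Set.mem_iUnion.2 ⟨t + 1, ?_⟩
  rw [Function.iterate_succ_apply']
  exact Or.inr <| hr.trans <| Set.ncard_le_ncard fun u hu => ⟨(hS u hu).1, ht hu⟩

lemma percolates_of_percClosure_eq_univ [Finite V] (h : percClosure G r A = Set.univ) :
    Percolates G r A := by
  obtain ⟨t, ht⟩ := exists_subset_iterate_of_subset_percClosure h.ge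
  exact ⟨t, Set.eq_univ_of_univ_subset ht⟩

lemma percStep_eq_self_of_ncard_lt [Finite V] (h : A.ncard < r) : percStep G r A = A :=
  Set.union_eq_left.2 fun _ hv =>
    absurd (hv.trans (Set.ncard_le_ncard fun _ hu => hu.2)) h.not_ge

lemma Percolates.eq_univ_of_ncard_lt [Finite V] (hA : Percolates G r A) (h : A.ncard < r) :
    A = Set.univ := by
  obtain ⟨t, ht⟩ := hA
  rwa [Function.iterate_fixed (percStep_eq_self_of_ncard_lt h)] at ht

lemma percNum_le (hA : Percolates G r A) : percNum G r ≤ A.ncard :=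
  Nat.sInf_le ⟨A, hA, rfl⟩

lemma le_percNum [Finite V] (h : r ≤ Nat.card V) : r ≤ percNum G r := by
  refine le_csInf ⟨_, Set.univ, ⟨0, rfl⟩, rfl⟩ ?_
  rintro _ ⟨A, hA, rfl⟩
  by_contra! hlt
  rw [hA.eq_univ_of_ncard_lt hlt, Set.ncard_univ] at hlt
  omega

end Percolation

lemma SimpleGraph.Connected.exists_adj_adj_ne {V : Type*} {G : SimpleGraph V} (hG : G.Connected)
    (h : 3 ≤ Nat.card V) : ∃ g u₁ u₂, u₁ ≠ u₂ ∧ G.Adj g u₁ ∧ G.Adj g u₂ := by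
  have : Finite V := Nat.finite_of_card_ne_zero (by omega)
  have : Nontrivial V := Finite.one_lt_card_iff_nontrivial.1 (by omega)
  obtain ⟨a⟩ := hG.nonempty
  obtain ⟨x, hax⟩ := hG.preconnected.exists_adj_of_nontrivial a
  obtain ⟨c, hc⟩ : ∃ c, c ∉ ({a, x} : Set V) := by
    by_contra! hall
    have := Set.ncard_le_ncard (Set.univ_subset_iff.2 (Set.eq_univ_of_forall hall)).ge
    rw [Set.ncard_univ, Set.ncard_pair hax.ne] at this
    omega
  obtain ⟨d, -, hd, hdc⟩ := (hG.preconnected a c).some.exists_boundary_dart _ (by simp) hc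
  simp only [Set.mem_insert_iff, Set.mem_singleton_iff, not_or] at hd hdc
  rcases hd with hd | hd
  · exact ⟨a, x, d.snd, Ne.symm hdc.2, hax, hd ▸ d.adj⟩
  · exact ⟨x, a, d.snd, Ne.symm hdc.1, hax.symm, hd ▸ d.adj⟩

section DirectProdComplete

variable {V : Type*} [Finite V] {G : SimpleGraph V} {r n : ℕ}

lemma mem_percClosure_of_adj_of_column (hrn : r < n) {A : Set (V × Fin n)} {a b : V}
    (hab : G.Adj a b) (ha : ∀ j, (a, j) ∈ percClosure (directProd G ⊤) r A) (j : Fin n) :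
    (b, j) ∈ percClosure (directProd G ⊤) r A := by
  refine mem_percClosure_of_le_ncard (S := Prod.mk a '' {j}ᶜ) ?_ ?_
  · rintro _ ⟨i, hi, rfl⟩
    exact ⟨⟨hab.symm, Ne.symm hi⟩, ha i⟩
  · rw [Set.ncard_image_of_injective _ (Prod.mk_right_injective a), Set.ncard_compl,
      Set.ncard_singleton, Nat.card_fin]
    omega

lemma percClosure_eq_univ_of_column (hG : G.Preconnected) (hrn : r < n) {A : Set (V × Fin n)}
    {g : V} (hg : ∀ j, (g, j) ∈ percClosure (directProd G ⊤) r A) :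
    percClosure (directProd G ⊤) r A = Set.univ := by
  have column_of_walk : ∀ {a b : V}, G.Walk a b →
      (∀ j, (a, j) ∈ percClosure (directProd G ⊤) r A) →
      ∀ j, (b, j) ∈ percClosure (directProd G ⊤) r A := by
    intro a b p
    induction p with
    | nil => exact id
    | cons hadj _ ih => exact fun h => ih (mem_percClosure_of_adj_of_column hrn hadj h)
  exact Set.eq_univ_of_forall fun ⟨v, j⟩ => column_of_walk (hG g v).some hg j

lemma mem_percClosure_column (hr : 2 ≤ r) (hn : 2 * r ≤ n) {g u₁ u₂ : V} (hne : u₁ ≠ u₂)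
    (h₁ : G.Adj g u₁) (h₂ : G.Adj g u₂) {R : Set (Fin n)} (hR : R.ncard = r) (j : Fin n) :
    (g, j) ∈ percClosure (directProd G ⊤) r ({g} ×ˢ R) := by
  have side : ∀ u, G.Adj g u → ∀ i ∉ R, (u, i) ∈ percClosure (directProd G ⊤) r ({g} ×ˢ R) := by
    intro u hu i hi
    refine mem_percClosure_of_le_ncard (S := {g} ×ˢ R) ?_ ?_
    · rintro ⟨g', i'⟩ hgi
      obtain ⟨rfl, hi'⟩ := Set.mem_prod.1 hgi
      exact ⟨⟨hu.symm, (ne_of_mem_of_not_mem hi' hi).symm⟩, subset_percClosure hgi⟩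
    · rw [Set.ncard_prod, Set.ncard_singleton, one_mul, hR]
  refine mem_percClosure_of_le_ncard (S := {u₁, u₂} ×ˢ (Rᶜ \ {j})) ?_ ?_
  · rintro ⟨u, i⟩ hui
    obtain ⟨hu, hiR, hij⟩ := Set.mem_prod.1 hui
    have hgu : G.Adj g u := by rcases hu with rfl | rfl <;> assumption
    exact ⟨⟨hgu, Ne.symm hij⟩, side u hgu i hiR⟩
  · have hRc : n - r - 1 ≤ (Rᶜ \ {j}).ncard := by
      have := Set.pred_ncard_le_ncard_sdiff_singleton Rᶜ j
      rwa [Set.ncard_compl, hR, Nat.card_fin] at this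
    rw [Set.ncard_prod, Set.ncard_pair hne]
    omega

end DirectProdComplete

theorem stmt_17 {V : Type*} [Fintype V] (G : SimpleGraph V)
    (r : ℕ) (hr : 2 ≤ r) (hG : G.Connected) (hcard : 3 ≤ Fintype.card V)
    (n : ℕ) (hn : 2 * r ≤ n) :
    percNum (directProd G (⊤ : SimpleGraph (Fin n))) r = r := by
  obtain ⟨g, u₁, u₂, hne, h₁, h₂⟩ := hG.exists_adj_adj_ne (by rwa [Nat.card_eq_fintype_card])
  obtain ⟨R, -, hR⟩ := Finset.exists_subset_card_eq (s := (Finset.univ : Finset (Fin n)))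
    (n := r) (by rw [Finset.card_univ, Fintype.card_fin]; omega)
  have hRr : (R : Set (Fin n)).ncard = r := by rw [Set.ncard_coe_finset, hR]
  have hperc : Percolates (directProd G ⊤) r ({g} ×ˢ (R : Set (Fin n))) :=
    percolates_of_percClosure_eq_univ <| percClosure_eq_univ_of_column hG.preconnected
      (by omega) (mem_percClosure_column hr hn hne h₁ h₂ hRr)
  refine le_antisymm ?_ (le_percNum ?_)
  · calc _ ≤ _ := percNum_le hperc
      _ = r := by rw [Set.ncard_prod, Set.ncard_singleton, one_mul, hRr]
  · rw [Nat.card_prod, Nat.card_eq_fintype_card, Nat.card_fin]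
    nlinarith
end
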